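/- Let φ: G → H be a homomorphism of finite groups and let H_φ be the object of ^H Fin_G with underlying set H, left H-action given by left multiplication, and right G-action given by a·g = aφ(g). For any finite (G,H)-biset X with free left G-action, the set H_φ ×_{(H,G)} X is in bijection with the set of φ-conjugacy classes of X, where x, y ∈ X are called φ-conjugate if x = g^{-1}·y·φ(g) for some g ∈ G. In particular, taking φ = id_G and X = G with both actions by multiplication, G ×_{(G,G)} G is the set of conjugacy classes of G. -/

import Mathlib

open CategoryTheory CategoryTheory.Limits MulOpposite

namespace Paper

/-- A functor preserves pullbacks, finite coproducts, and epimorphisms. -/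
def PreservesPCE {C : Type*} {D : Type*} [Category C] [Category D] (F : C ⥤ D) : Prop :=
  Nonempty (PreservesLimitsOfShape WalkingCospan F) ∧
  (∀ (J : Type) [Finite J], Nonempty (PreservesColimitsOfShape (Discrete J) F)) ∧
  F.PreservesEpimorphisms

/-- `Fun_pce C D`: the full subcategory of the functor category spanned by the functors
preserving pullbacks, finite coproducts and epimorphisms. -/
abbrev FunPCE (C : Type*) (D : Type*) [Category C] [Category D] :=
  ObjectProperty.FullSubcategory (fun F : C ⥤ D => PreservesPCE F)

/-- Finite sets with an action of the monoid `M`. -/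
abbrev ActCat (M : Type) [Monoid M] := Action FintypeCat.{0} (MonCat.of M)

/-- `Fin_G`: finite right `G`-sets (encoded as left `Gᵐᵒᵖ`-actions). -/
abbrev FinRight (G : Type) [Group G] := ActCat Gᵐᵒᵖ

/-- `^G Fin`: the category of finite *free* left `G`-sets. -/
abbrev FinFreeL (G : Type) [Group G] :=
  ObjectProperty.FullSubcategory (fun X : ActCat G => ∀ (g : G) (x : X.V), ConcreteCategory.hom (X.ρ g) x = x → g = 1)

/-- Finite `(G,H)`-bisets: a left `G`-action and a commuting right `H`-action. -/
abbrev BiAct (G H : Type) [Group G] [Group H] := ActCat (G × Hᵐᵒᵖ)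

/-- The left `G`-action of a `(G,H)`-biset is free. -/
def LeftFree {G H : Type} [Group G] [Group H] (X : BiAct G H) : Prop :=
  ∀ (g : G) (x : X.V), ConcreteCategory.hom (X.ρ (g, 1)) x = x → g = 1

/-- `^G Fin_H`: finite `(G,H)`-bisets whose left `G`-action is free. -/
abbrev BiFin (G H : Type) [Group G] [Group H] :=
  ObjectProperty.FullSubcategory (fun X : BiAct G H => LeftFree X)

/-- The separable `(G,H)`-biset `G × T` attached to a finite right `H`-set `T`,
with actions `g • (g', t) • h = (g * g', t • h)`. -/
noncomputable def sepBiset (G H : Type) [Group G] [Group H] [Fintype G]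
    (T : ActCat Hᵐᵒᵖ) : BiAct G H where
  V := FintypeCat.of (G × T.V)
  ρ :=
    { toFun := fun m => FintypeCat.homMk fun (p : G × T.V) =>
        (m.1 * p.1, ConcreteCategory.hom (T.ρ m.2) p.2)
      map_one' := by
        refine FintypeCat.hom_ext _ _ fun p => ?_
        show ((1 : G) * p.1, ConcreteCategory.hom (T.ρ 1) p.2) = p
        simp
      map_mul' := by
        intro a b
        refine FintypeCat.hom_ext _ _ fun p => ?_
        show ((a.1 * b.1) * p.1, ConcreteCategory.hom (T.ρ (a.2 * b.2)) p.2)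
          = (a.1 * (b.1 * p.1), ConcreteCategory.hom (T.ρ a.2) (ConcreteCategory.hom (T.ρ b.2) p.2))
        rw [mul_assoc, map_mul]
        rfl }

/-- A `(G,H)`-biset is separable if it is isomorphic to `G × T`
for some finite right `H`-set `T`. -/
def Separable (G H : Type) [Group G] [Group H] [Fintype G] (X : BiAct G H) : Prop :=
  ∃ T : ActCat Hᵐᵒᵖ, Nonempty (X ≅ sepBiset G H T)

/-- `(^G Fin_H)^sep`: the full subcategory of separable bisets. -/
abbrev SepCat (G H : Type) [Group G] [Group H] [Fintype G] :=
  ObjectProperty.FullSubcategory (fun X : BiFin G H => Separable G H X.obj)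

variable {G H : Type} [Group G] [Group H]

/-- The relation generating `X ×_{(H,G)} Y`: `(x·g, y) ~ (x, g·y)` and `(h·x, y) ~ (x, y·h)`. -/
def pairRel (X : BiAct H G) (Y : BiAct G H) : X.V × Y.V → X.V × Y.V → Prop :=
  fun p q =>
    (∃ g : G, p.1 = ConcreteCategory.hom (X.ρ (1, op g)) q.1 ∧
      q.2 = ConcreteCategory.hom (Y.ρ (g, 1)) p.2) ∨
    (∃ h : H, q.1 = ConcreteCategory.hom (X.ρ (h, 1)) p.1 ∧
      p.2 = ConcreteCategory.hom (Y.ρ (1, op h)) q.2)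

/-- `X ×_{(H,G)} Y`: the quotient of `X × Y` by the equivalence relation generated by
`(x·g, y) ~ (x, g·y)` and `(h·x, y) ~ (x, y·h)`. -/
def PairSet (X : BiAct H G) (Y : BiAct G H) : Type := Quot (pairRel X Y)

instance (X : BiAct H G) (Y : BiAct G H) : Finite (PairSet X Y) :=
  Quot.finite _

/-- `X ×_{(H,G)} Y` as an object of the category of finite sets. -/
noncomputable def pairObj (X : BiAct H G) (Y : BiAct G H) : FintypeCat :=
  letI := Fintype.ofFinite (PairSet X Y)
  FintypeCat.of (PairSet X Y)

/-- Functoriality of `X ×_{(H,G)} Y` in `X`. -/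
noncomputable def pairMapFst {X X' : BiAct H G} (f : X ⟶ X') (Y : BiAct G H) :
    pairObj X Y ⟶ pairObj X' Y :=
  FintypeCat.homMk <| Quot.map (fun (p : X.V × Y.V) => (f.hom p.1, p.2)) (by
    rintro ⟨x, y⟩ ⟨x', y'⟩ (⟨g, h1, h2⟩ | ⟨h, h1, h2⟩)
    · left
      refine ⟨g, ?_, h2⟩
      have := ConcreteCategory.congr_hom (f.comm (1, op g)) x'
      simp only [FintypeCat.comp_apply] at this
      dsimp only at h1 ⊢
      rw [h1]; exact this
    · right
      refine ⟨h, ?_, h2⟩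
      have := ConcreteCategory.congr_hom (f.comm (h, 1)) x
      simp only [FintypeCat.comp_apply] at this
      dsimp only at h1 ⊢
      rw [h1]; exact this)

/-- Functoriality of `X ×_{(H,G)} Y` in `Y`. -/
noncomputable def pairMapSnd (X : BiAct H G) {Y Y' : BiAct G H} (f : Y ⟶ Y') :
    pairObj X Y ⟶ pairObj X Y' :=
  FintypeCat.homMk <| Quot.map (fun (p : X.V × Y.V) => (p.1, f.hom p.2)) (by
    rintro ⟨x, y⟩ ⟨x', y'⟩ (⟨g, h1, h2⟩ | ⟨h, h1, h2⟩)
    · left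
      refine ⟨g, h1, ?_⟩
      have := ConcreteCategory.congr_hom (f.comm (g, 1)) y
      simp only [FintypeCat.comp_apply] at this
      dsimp only at h2 ⊢
      rw [h2]; exact this
    · right
      refine ⟨h, h1, ?_⟩
      have := ConcreteCategory.congr_hom (f.comm (1, op h)) y'
      simp only [FintypeCat.comp_apply] at this
      dsimp only at h2 ⊢
      rw [h2]; exact this)

/-- For a fixed biset `X`, the functor `X ×_{(H,G)} -` on all of `^G Fin_H`. -/
noncomputable def pairFstFunctorRaw (X : BiAct H G) : BiAct G H ⥤ FintypeCat where
  obj Y := pairObj X Y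
  map f := pairMapSnd X f
  map_id Y := by
    refine FintypeCat.hom_ext _ _ fun q => ?_
    induction q using Quot.ind
    rfl
  map_comp f g := by
    refine FintypeCat.hom_ext _ _ fun q => ?_
    induction q using Quot.ind
    rfl

/-- For a fixed biset `X` in `^H Fin_G`, the functor `X ×_{(H,G)} -` on `(^G Fin_H)^sep`. -/
noncomputable def pairFstFunctor (G H : Type) [Group G] [Group H] [Fintype G]
    (X : BiAct H G) : SepCat G H ⥤ FintypeCat :=
  ObjectProperty.ι _ ⋙ ObjectProperty.ι _ ⋙ pairFstFunctorRaw X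

/-- For a fixed biset `Y` in `^G Fin_H`, the functor `- ×_{(H,G)} Y` on `^H Fin_G`. -/
noncomputable def pairSndFunctor (G H : Type) [Group G] [Group H]
    (Y : BiAct G H) : BiFin H G ⥤ FintypeCat where
  obj X := pairObj X.obj Y
  map f := pairMapFst f.hom Y
  map_id X := by
    refine FintypeCat.hom_ext _ _ fun q => ?_
    induction q using Quot.ind
    rfl
  map_comp f g := by
    refine FintypeCat.hom_ext _ _ fun q => ?_
    induction q using Quot.ind
    rfl

variable (G H) [Fintype G] [Fintype H]

/-- The functor `(^G Fin_H)^sep ⟶ Fun_pce(^H Fin_G, Fin)` induced by the pairing. -/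
noncomputable def pairingPhi
    (h : ∀ Y : SepCat G H, PreservesPCE (pairSndFunctor G H Y.obj.obj)) :
    SepCat G H ⥤ FunPCE (BiFin H G) FintypeCat where
  obj Y := ⟨pairSndFunctor G H Y.obj.obj, h Y⟩
  map {Y Y'} f :=
    ObjectProperty.homMk
    { app := fun X => pairMapSnd X.obj f.hom.hom
      naturality := by
        intro X X' g
        refine FintypeCat.hom_ext _ _ fun q => ?_
        induction q using Quot.ind
        rfl }
  map_id Y := by
    apply ObjectProperty.hom_ext
    apply NatTrans.ext
    funext X
    refine FintypeCat.hom_ext _ _ fun q => ?_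
    induction q using Quot.ind
    rfl
  map_comp f g := by
    apply ObjectProperty.hom_ext
    apply NatTrans.ext
    funext X
    refine FintypeCat.hom_ext _ _ fun q => ?_
    induction q using Quot.ind
    rfl

/-- The functor `^H Fin_G ⟶ Fun_pce((^G Fin_H)^sep, Fin)` induced by the pairing. -/
noncomputable def pairingPsi
    (h : ∀ X : BiFin H G, PreservesPCE (pairFstFunctor G H X.obj)) :
    BiFin H G ⥤ FunPCE (SepCat G H) FintypeCat where
  obj X := ⟨pairFstFunctor G H X.obj, h X⟩
  map {X X'} f :=
    ObjectProperty.homMk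
    { app := fun Y => pairMapFst f.hom Y.obj.obj
      naturality := by
        intro Y Y' g
        refine FintypeCat.hom_ext _ _ fun q => ?_
        induction q using Quot.ind
        rfl }
  map_id X := by
    apply ObjectProperty.hom_ext
    apply NatTrans.ext
    funext Y
    refine FintypeCat.hom_ext _ _ fun q => ?_
    induction q using Quot.ind
    rfl
  map_comp f g := by
    apply ObjectProperty.hom_ext
    apply NatTrans.ext
    funext Y
    refine FintypeCat.hom_ext _ _ fun q => ?_
    induction q using Quot.ind
    rfl

end Paper

namespace Paper

variable (G H : Type) [Group G] [Group H] [Fintype G] [Fintype H]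

/-- The biset `H_φ` in `^H Fin_G` attached to a homomorphism `φ : G → H`: underlying set
`H`, left `H`-action by left multiplication, right `G`-action `a · g = a * φ(g)`. -/
noncomputable def phiBiset (φ : G →* H) : BiAct H G where
  V := FintypeCat.of H
  ρ :=
    { toFun := fun m => FintypeCat.homMk fun (a : H) => m.1 * a * φ m.2.unop
      map_one' := by
        refine FintypeCat.hom_ext _ _ fun (a : H) => ?_
        show (1 : H) * a * φ ((1 : Gᵐᵒᵖ)).unop = a
        simp
      map_mul' := by
        intro m m'
        refine FintypeCat.hom_ext _ _ fun (a : H) => ?_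
        show (m.1 * m'.1) * a * φ ((m.2 * m'.2).unop)
          = m.1 * (m'.1 * a * φ (m'.2.unop)) * φ (m.2.unop)
        simp [mul_assoc] }

/-- The group `G` as a `(G,G)`-biset, with both actions given by multiplication. -/
noncomputable def bimodG : BiAct G G where
  V := FintypeCat.of G
  ρ :=
    { toFun := fun m => FintypeCat.homMk fun (a : G) => m.1 * a * m.2.unop
      map_one' := by
        refine FintypeCat.hom_ext _ _ fun (a : G) => ?_
        show (1 : G) * a * ((1 : Gᵐᵒᵖ)).unop = a
        simp
      map_mul' := by
        intro m m'
        refine FintypeCat.hom_ext _ _ fun (a : G) => ?_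
        show (m.1 * m'.1) * a * ((m.2 * m'.2).unop)
          = m.1 * (m'.1 * a * (m'.2.unop)) * (m.2.unop)
        simp [mul_assoc] }

end Paper

/-!
The map `[a, x] ↦ [x · a]` identifies `H_φ ×_{(H,G)} X` with the `φ`-conjugacy classes of `X`,
with inverse `[x] ↦ [1, x]`. The relation lets `a` be moved into `X` entirely, and on the pairs
`(1, x)` it reduces to `φ`-conjugacy, because `(1, g⁻¹ · y · φ(g)) ~ (φ(g), g⁻¹ · y) ~ (1, y)`.
For `φ = id` and `X = G`, `φ`-conjugacy is ordinary conjugacy.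
-/

namespace Paper

section ActionApply

variable {M : Type} [Monoid M] (X : ActCat M)

lemma ρ_mul_apply (m m' : M) (x : X.V) :
    ConcreteCategory.hom (X.ρ (m * m')) x
      = ConcreteCategory.hom (X.ρ m) (ConcreteCategory.hom (X.ρ m') x) := by
  rw [map_mul]
  rfl

lemma ρ_one_apply (x : X.V) : ConcreteCategory.hom (X.ρ 1) x = x := by
  rw [map_one]
  rfl

end ActionApply

section PhiConjugacy

variable {G H : Type} [Group G] [Group H]

def IsPhiConj (φ : G →* H) (X : BiAct G H) (x y : X.V) : Prop :=
  ∃ g : G, x = ConcreteCategory.hom (X.ρ (g⁻¹, op (φ g))) y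

variable [Fintype H] (φ : G →* H) (X : BiAct G H)

lemma phiBiset_ρ_left_apply (h a : H) :
    ConcreteCategory.hom ((phiBiset G H φ).ρ (h, 1)) a = h * a :=
  show h * a * φ 1 = h * a by simp

lemma phiBiset_ρ_right_apply (g : G) (a : H) :
    ConcreteCategory.hom ((phiBiset G H φ).ρ (1, op g)) a = a * φ g :=
  show 1 * a * φ g = a * φ g by simp

def pairSetPhiBisetToQuot : PairSet (phiBiset G H φ) X → Quot (IsPhiConj φ X) :=
  Quot.lift (fun p => Quot.mk _ (ConcreteCategory.hom (X.ρ (1, op (p.1 : H))) p.2)) <| by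
    rintro ⟨(a : H), x⟩ ⟨(a' : H), x'⟩ (⟨g, ha, hx⟩ | ⟨h, ha', hx⟩)
    · obtain rfl : a = a' * φ g := ha.trans (phiBiset_ρ_right_apply φ g a')
      apply Quot.sound
      refine ⟨g, ?_⟩
      rw [hx, ← ρ_mul_apply, ← ρ_mul_apply]
      simp
    · obtain rfl : a' = h * a := ha'.trans (phiBiset_ρ_left_apply φ h a)
      congr 1
      rw [hx, ← ρ_mul_apply]
      simp

def quotToPairSetPhiBiset : Quot (IsPhiConj φ X) → PairSet (phiBiset G H φ) X :=
  Quot.lift (fun x => Quot.mk _ ((1 : H), x)) <| by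
    rintro x y ⟨g, rfl⟩
    have slide_left : pairRel (phiBiset G H φ) X
        ((1 : H), ConcreteCategory.hom (X.ρ (g⁻¹, op (φ g))) y)
        (φ g, ConcreteCategory.hom (X.ρ (g⁻¹, 1)) y) := by
      refine Or.inr ⟨φ g, ((phiBiset_ρ_left_apply φ (φ g) 1).trans (mul_one (φ g))).symm, ?_⟩
      rw [← ρ_mul_apply]
      simp
    have slide_right : pairRel (phiBiset G H φ) X
        (φ g, ConcreteCategory.hom (X.ρ (g⁻¹, 1)) y) ((1 : H), y) := by
      refine Or.inl ⟨g, ((phiBiset_ρ_right_apply φ g 1).trans (one_mul (φ g))).symm, ?_⟩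
      rw [← ρ_mul_apply]
      simp [Prod.mk_one_one]
    exact (Quot.sound slide_left).trans (Quot.sound slide_right)

def pairSetPhiBisetEquiv : PairSet (phiBiset G H φ) X ≃ Quot (IsPhiConj φ X) where
  toFun := pairSetPhiBisetToQuot φ X
  invFun := quotToPairSetPhiBiset φ X
  left_inv := by
    rintro ⟨(a : H), x⟩
    exact Quot.sound (Or.inr ⟨a, ((phiBiset_ρ_left_apply φ a 1).trans (mul_one a)).symm, rfl⟩)
  right_inv := by
    rintro ⟨x⟩
    exact congrArg (Quot.mk _) (by rw [op_one, Prod.mk_one_one, ρ_one_apply])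

end PhiConjugacy

variable (G : Type) [Group G] [Fintype G]

lemma isPhiConj_id_bimodG_iff (x y : G) :
    IsPhiConj (MonoidHom.id G) (bimodG G) x y ↔ IsConj x y := by
  rw [isConj_iff]
  refine exists_congr fun g => ?_
  change x = g⁻¹ * y * g ↔ g * x * g⁻¹ = y
  constructor <;> rintro rfl <;> group

def quotIsPhiConjBimodGEquiv : Quot (IsPhiConj (MonoidHom.id G) (bimodG G)) ≃ ConjClasses G :=
  Quot.congrRight (isPhiConj_id_bimodG_iff G)

end Paper

namespace Paper

variable (G H : Type) [Group G] [Group H] [Fintype G] [Fintype H]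

theorem phi_conjugacy (φ : G →* H) (X : BiAct G H) :
    Nonempty (PairSet (phiBiset G H φ) X ≃
        Quot (fun x y : X.V => ∃ g : G, x = ConcreteCategory.hom (X.ρ (g⁻¹, op (φ g))) y)) ∧
    Nonempty (PairSet (phiBiset G G (MonoidHom.id G)) (bimodG G) ≃ ConjClasses G) :=
  ⟨⟨pairSetPhiBisetEquiv φ X⟩,
    ⟨(pairSetPhiBisetEquiv (MonoidHom.id G) (bimodG G)).trans (quotIsPhiConjBimodGEquiv G)⟩⟩

end Paper
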